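/- Let G be a closed subgroup of linear isometries of ℝ^N with ℓ(G) finite and μ_G as defined. Then 0 < μ_G ≤ 2. -/

import Mathlib

open Set Metric

noncomputable section

abbrev Euc (N : ℕ) := EuclideanSpace ℝ (Fin N)

/-- The orbit of a point `x` under a subgroup `G` of linear isometries. -/
def Gorbit {N : ℕ} (G : Subgroup (Euc N ≃ₗᵢ[ℝ] Euc N)) (x : Euc N) : Set (Euc N) :=
  {y | ∃ g ∈ G, g x = y}

/-- The set `Σ` of unit vectors whose orbit has minimal cardinality `ℓ`. -/
def GSigma {N : ℕ} (G : Subgroup (Euc N ≃ₗᵢ[ℝ] Euc N)) (ℓ : ℕ∞) : Set (Euc N) :=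
  {x ∈ sphere (0 : Euc N) 1 | (Gorbit G x).encard = ℓ}

/-- `μ(Gz)`: the least distance between two distinct points of the orbit of `z`,
or `2‖z‖` if the orbit is a singleton. -/
def Gmu {N : ℕ} (G : Subgroup (Euc N ≃ₗᵢ[ℝ] Euc N)) (z : Euc N) : ℝ :=
  if 2 ≤ (Gorbit G z).encard then
    sInf {d : ℝ | ∃ g ∈ G, ∃ h ∈ G, g z ≠ h z ∧ d = dist (g z) (h z)}
  else 2 * ‖z‖

/-!
Orbits of nonzero vectors have at least `ℓ` points and orbit cardinality is lower
semicontinuous, so `Σ` is closed in the unit sphere, hence compact. On `Σ` orbits are finite,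
so `μ(Gz) > 0`. If `z, z' ∈ Σ` and `2|z - z'| < μ(Gz)`, then `gz' = hz'` forces `gz = hz`; as
both orbits have the same finite size `ℓ` the converse holds as well, whence
`μ(Gz') ≥ μ(Gz) - 2|z - z'|`. Thus `μ` is lower semicontinuous on `Σ` and attains its
infimum, which is positive. Distinct unit vectors are at most `2` apart, so `μ_G ≤ 2`.
-/

theorem Set.two_le_encard_iff_nontrivial {α : Type*} {s : Set α} :
    2 ≤ s.encard ↔ s.Nontrivial := by
  rw [← one_lt_encard_iff_nontrivial, ← ENat.add_one_le_iff ENat.one_ne_top]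
  rfl

theorem Set.apply_eq_of_apply_eq_of_encard_image_eq {α β γ : Type*} {s : Set α}
    {f : α → β} {g : α → γ} (hfin : (f '' s).Finite)
    (hcard : (g '' s).encard = (f '' s).encard)
    (hgf : ∀ a ∈ s, ∀ b ∈ s, g a = g b → f a = f b)
    {a b : α} (ha : a ∈ s) (hb : b ∈ s) (hab : f a = f b) : g a = g b := by
  set Γ := (fun a => (f a, g a)) '' s
  have hsnd : InjOn Prod.snd Γ := by
    rintro _ ⟨a, ha, rfl⟩ _ ⟨b, hb, rfl⟩ h
    exact Prod.ext (hgf a ha b hb h) h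
  have hΓ : Γ.encard = (f '' s).encard := by
    rw [← hsnd.encard_image, image_image]
    exact hcard
  have hfst : InjOn Prod.fst Γ := by
    refine Finite.injOn_of_encard_image_eq ?_ ?_
    · exact encard_ne_top_iff.1 (hΓ ▸ hfin.encard_lt_top.ne)
    · rw [image_image]
      exact hΓ.symm
  exact congrArg Prod.snd (hfst (mem_image_of_mem _ ha) (mem_image_of_mem _ hb) hab)

theorem Isometry.dist_le_dist_add_two_mul {E : Type*} [PseudoMetricSpace E] {g h : E → E}
    (hg : Isometry g) (hh : Isometry h) (z z' : E) :
    dist (g z) (h z) ≤ dist (g z') (h z') + 2 * dist z z' :=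
  calc dist (g z) (h z) ≤ dist (g z) (g z') + dist (g z') (h z') + dist (h z') (h z) :=
        dist_triangle4 _ _ _ _
    _ = dist (g z') (h z') + 2 * dist z z' := by
        rw [hg.dist_eq, hh.dist_eq, dist_comm z' z]
        ring

section

variable {N : ℕ} {G : Subgroup (Euc N ≃ₗᵢ[ℝ] Euc N)} {ℓ : ℕ∞}

theorem norm_of_mem_Gorbit {x y : Euc N} (h : y ∈ Gorbit G x) : ‖y‖ = ‖x‖ := by
  obtain ⟨g, -, rfl⟩ := h
  exact g.norm_map x

theorem Gorbit_smul (c : ℝ) (x : Euc N) : Gorbit G (c • x) = (c • ·) '' Gorbit G x := by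
  ext y
  simp only [Gorbit, mem_image, map_smul]
  exact ⟨fun ⟨g, hg, hy⟩ => ⟨g x, ⟨g, hg, rfl⟩, hy⟩,
    fun ⟨_, ⟨g, hg, rfl⟩, hy⟩ => ⟨g, hg, hy⟩⟩

theorem inv_norm_smul_mem_GSigma {x : Euc N} (hx : x ≠ 0) :
    ‖x‖⁻¹ • x ∈ GSigma G (Gorbit G x).encard := by
  refine ⟨mem_sphere_zero_iff_norm.2 (norm_smul_inv_norm hx), ?_⟩
  rw [Gorbit_smul, (smul_right_injective _ (inv_ne_zero (norm_ne_zero_iff.2 hx))).encard_image]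

theorem lowerSemicontinuous_encard_Gorbit :
    LowerSemicontinuous fun x : Euc N => (Gorbit G x).encard := by
  intro x y hy
  lift y to ℕ using hy.ne_top
  obtain ⟨S₀, hS₀G, hS₀⟩ :=
    exists_subset_bijOn (G : Set (Euc N ≃ₗᵢ[ℝ] Euc N)) (fun g => g x)
  have hyS₀ : y + 1 ≤ S₀.encard := by
    rw [← hS₀.injOn.encard_image, hS₀.image_eq]
    exact Order.add_one_le_of_lt hy
  obtain ⟨S, hSS₀, hS⟩ := exists_subset_encard_eq hyS₀
  have hSfin : S.Finite := finite_of_encard_eq_coe (k := y + 1) hS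
  have hinj : ∀ᶠ x' in nhds x, InjOn (fun g : Euc N ≃ₗᵢ[ℝ] Euc N => g x') S := by
    simp only [InjOn, hSfin.eventually_all]
    intro a ha b hb
    by_cases hab : a = b
    · exact Filter.Eventually.of_forall fun _ _ => hab
    have hne : a x ≠ b x := fun h => hab (hS₀.injOn (hSS₀ ha) (hSS₀ hb) h)
    filter_upwards [(isOpen_ne_fun a.continuous b.continuous).mem_nhds hne] with x' hx' h
    exact absurd h hx'
  filter_upwards [hinj] with x' hx'
  calc (y : ℕ∞) < y + 1 := by exact_mod_cast y.lt_succ_self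
    _ = ((fun g : Euc N ≃ₗᵢ[ℝ] Euc N => g x') '' S).encard := by rw [hx'.encard_image, hS]
    _ ≤ (Gorbit G x').encard := encard_mono (image_mono (hSS₀.trans hS₀G))

theorem isCompact_GSigma (hℓ : ∀ x : Euc N, x ≠ 0 → ℓ ≤ (Gorbit G x).encard) :
    IsCompact (GSigma G ℓ) := by
  have hSigma : GSigma G ℓ = sphere 0 1 ∩ (fun x => (Gorbit G x).encard) ⁻¹' Iic ℓ := by
    ext x
    exact ⟨fun ⟨hx, hxℓ⟩ => ⟨hx, hxℓ.le⟩, fun ⟨hx, hxℓ⟩ =>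
      ⟨hx, le_antisymm hxℓ (hℓ x (ne_zero_of_mem_unit_sphere ⟨x, hx⟩))⟩⟩
  rw [hSigma]
  exact (isCompact_sphere 0 1).inter_right (lowerSemicontinuous_encard_Gorbit.isClosed_preimage ℓ)

def orbitDists (G : Subgroup (Euc N ≃ₗᵢ[ℝ] Euc N)) (z : Euc N) : Set ℝ :=
  {d | ∃ g ∈ G, ∃ h ∈ G, g z ≠ h z ∧ d = dist (g z) (h z)}

theorem Gmu_of_nontrivial {z : Euc N} (hz : (Gorbit G z).Nontrivial) :
    Gmu G z = sInf (orbitDists G z) :=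
  if_pos (two_le_encard_iff_nontrivial.2 hz)

theorem Gmu_of_subsingleton {z : Euc N} (hz : (Gorbit G z).Subsingleton) :
    Gmu G z = 2 * ‖z‖ :=
  if_neg fun h => not_nontrivial_iff.2 hz (two_le_encard_iff_nontrivial.1 h)

theorem Gmu_le_dist {z a b : Euc N} (ha : a ∈ Gorbit G z) (hb : b ∈ Gorbit G z)
    (hab : a ≠ b) : Gmu G z ≤ dist a b := by
  rw [Gmu_of_nontrivial ⟨a, ha, b, hb, hab⟩]
  obtain ⟨g, hg, rfl⟩ := ha
  obtain ⟨h, hh, rfl⟩ := hb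
  have hbdd : BddBelow (orbitDists G z) :=
    ⟨0, fun _ ⟨_, _, _, _, _, hd⟩ => hd ▸ dist_nonneg⟩
  exact csInf_le hbdd ⟨g, hg, h, hh, hab, rfl⟩

theorem eq_of_dist_lt_Gmu {z a b : Euc N} (ha : a ∈ Gorbit G z) (hb : b ∈ Gorbit G z)
    (hab : dist a b < Gmu G z) : a = b := by
  by_contra hne
  exact (Gmu_le_dist ha hb hne).not_gt hab

theorem Gmu_pos {z : Euc N} (hfin : (Gorbit G z).Finite) (hz : z ≠ 0) : 0 < Gmu G z := by
  rcases (Gorbit G z).subsingleton_or_nontrivial with hsub | hnt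
  · rw [Gmu_of_subsingleton hsub]
    positivity
  have hfin' : (orbitDists G z).Finite :=
    ((hfin.prod hfin).image fun p => dist p.1 p.2).subset
      fun _ ⟨g, hg, h, hh, _, hd⟩ =>
        ⟨(g z, h z), ⟨⟨g, hg, rfl⟩, ⟨h, hh, rfl⟩⟩, hd.symm⟩
  rw [Gmu_of_nontrivial hnt]
  obtain ⟨_, ⟨g, hg, rfl⟩, _, ⟨h, hh, rfl⟩, hab⟩ := hnt
  have hdists : (orbitDists G z).Nonempty := ⟨_, g, hg, h, hh, hab, rfl⟩
  obtain ⟨_, _, _, _, hne, hd⟩ := hdists.csInf_mem hfin'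
  rw [hd]
  exact dist_pos.2 hne

theorem Gmu_le_two_mul_norm (z : Euc N) : Gmu G z ≤ 2 * ‖z‖ := by
  rcases (Gorbit G z).subsingleton_or_nontrivial with hsub | ⟨a, ha, b, hb, hab⟩
  · exact (Gmu_of_subsingleton hsub).le
  calc Gmu G z ≤ dist a b := Gmu_le_dist ha hb hab
    _ ≤ ‖a‖ + ‖b‖ := dist_le_norm_add_norm a b
    _ = 2 * ‖z‖ := by rw [norm_of_mem_Gorbit ha, norm_of_mem_Gorbit hb]; ring

theorem sub_two_mul_dist_le_Gmu {z z' : Euc N} (hfin : (Gorbit G z).Finite)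
    (hcard : (Gorbit G z').encard = (Gorbit G z).encard) (hzz' : 2 * dist z z' < Gmu G z) :
    Gmu G z - 2 * dist z z' ≤ Gmu G z' := by
  rcases (Gorbit G z').subsingleton_or_nontrivial with hsub | hnt
  · have hsub' : (Gorbit G z).Subsingleton := by
      rw [← encard_le_one_iff_subsingleton, ← hcard]
      exact encard_le_one_iff_subsingleton.2 hsub
    rw [Gmu_of_subsingleton hsub, Gmu_of_subsingleton hsub', dist_eq_norm]
    linarith [norm_sub_norm_le z z']
  have hfiber : ∀ g ∈ G, ∀ h ∈ G, g z' = h z' → g z = h z := fun g hg h hh he =>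
    eq_of_dist_lt_Gmu ⟨g, hg, rfl⟩ ⟨h, hh, rfl⟩ <| by
      linarith [g.isometry.dist_le_dist_add_two_mul h.isometry z z', dist_le_zero.2 he]
  rw [Gmu_of_nontrivial hnt]
  obtain ⟨_, ⟨g, hg, rfl⟩, _, ⟨h, hh, rfl⟩, hab⟩ := hnt
  refine le_csInf ⟨_, g, hg, h, hh, hab, rfl⟩ ?_
  rintro _ ⟨g, hg, h, hh, hne, rfl⟩
  have hne' : g z ≠ h z := fun he =>
    hne (apply_eq_of_apply_eq_of_encard_image_eq hfin hcard hfiber hg hh he)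
  linarith [Gmu_le_dist ⟨g, hg, rfl⟩ ⟨h, hh, rfl⟩ hne',
    g.isometry.dist_le_dist_add_two_mul h.isometry z z']

theorem finite_Gorbit_of_mem_GSigma (hfin : ℓ ≠ ⊤) {z : Euc N} (hz : z ∈ GSigma G ℓ) :
    (Gorbit G z).Finite :=
  encard_ne_top_iff.1 (hz.2 ▸ hfin)

theorem Gmu_pos_of_mem_GSigma (hfin : ℓ ≠ ⊤) {z : Euc N} (hz : z ∈ GSigma G ℓ) :
    0 < Gmu G z :=
  Gmu_pos (finite_Gorbit_of_mem_GSigma hfin hz) (ne_zero_of_mem_unit_sphere ⟨z, hz.1⟩)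

theorem lowerSemicontinuousOn_Gmu (hfin : ℓ ≠ ⊤) :
    LowerSemicontinuousOn (Gmu G) (GSigma G ℓ) := by
  intro z hz y hy
  have hpos := Gmu_pos_of_mem_GSigma hfin hz
  filter_upwards [self_mem_nhdsWithin,
    nhdsWithin_le_nhds (ball_mem_nhds z (half_pos hpos)),
    nhdsWithin_le_nhds (ball_mem_nhds z (half_pos (sub_pos.2 hy)))] with z' hz' h₁ h₂
  rw [mem_ball'] at h₁ h₂
  linarith [sub_two_mul_dist_le_Gmu (finite_Gorbit_of_mem_GSigma hfin hz)
    (hz'.2.trans hz.2.symm) (by linarith)]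

end

theorem muG_bounds_general {N : ℕ}
    (G : Subgroup (Euc N ≃ₗᵢ[ℝ] Euc N))
    (ℓ : ℕ∞)
    (hℓ : IsLeast {n : ℕ∞ | ∃ x : Euc N, x ≠ 0 ∧ (Gorbit G x).encard = n} ℓ)
    (hfin : ℓ ≠ ⊤) :
    0 < sInf (Gmu G '' GSigma G ℓ) ∧ sInf (Gmu G '' GSigma G ℓ) ≤ 2 := by
  obtain ⟨x, hx, hxℓ⟩ := hℓ.1
  have hne : (GSigma G ℓ).Nonempty := ⟨_, hxℓ ▸ inv_norm_smul_mem_GSigma hx⟩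
  obtain ⟨z, hz, hmin⟩ := (lowerSemicontinuousOn_Gmu hfin).exists_isMinOn hne
    (isCompact_GSigma fun x hx => hℓ.2 ⟨x, hx, rfl⟩)
  rw [IsLeast.csInf_eq ⟨mem_image_of_mem _ hz, forall_mem_image.2 (isMinOn_iff.1 hmin)⟩]
  refine ⟨Gmu_pos_of_mem_GSigma hfin hz, (Gmu_le_two_mul_norm z).trans_eq ?_⟩
  rw [mem_sphere_zero_iff_norm.1 hz.1, mul_one]

theorem muG_bounds {N : ℕ} (hN : 1 ≤ N)
    (G : Subgroup (Euc N ≃ₗᵢ[ℝ] Euc N))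
    (hG : IsClosed ((fun g : Euc N ≃ₗᵢ[ℝ] Euc N =>
      g.toLinearIsometry.toContinuousLinearMap) '' (G : Set (Euc N ≃ₗᵢ[ℝ] Euc N))))
    (ℓ : ℕ∞)
    (hℓ : IsLeast {n : ℕ∞ | ∃ x : Euc N, x ≠ 0 ∧ (Gorbit G x).encard = n} ℓ)
    (hfin : ℓ ≠ ⊤) :
    0 < sInf (Gmu G '' GSigma G ℓ) ∧ sInf (Gmu G '' GSigma G ℓ) ≤ 2 :=
  muG_bounds_general G ℓ hℓ hfin
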